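/- arXiv:2002.08106 — 2 statements merged into one kernel-verified Lean document; each statement's English description precedes it below -/
import Mathlib

section
/- Let n ≥ 2 and let G = (V,E) be an undirected connected graph on V = {1,…,n} with (i,i) ∈ E for every i. Then there exists a matrix W ∈ ℝ^{n×n} satisfying W1 = 1, Wᵀ1 = 1, W_{ij} = 0 for all (i,j) ∉ E, and ‖W − (1/n)11ᵀ‖ < 1. -/
open Matrix Filter

/-- Spectral radius of a real matrix: the maximum modulus of its complex eigenvalues. -/
noncomputable def specRad {n : ℕ} (A : Matrix (Fin n) (Fin n) ℝ) : ℝ :=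
  sSup {r : ℝ | ∃ μ : ℂ, μ ∈ spectrum ℂ (A.map Complex.ofReal) ∧ r = ‖μ‖}

/-- Induced 2-norm (largest singular value) of a real matrix. -/
noncomputable def ind2norm {n : ℕ} (A : Matrix (Fin n) (Fin n) ℝ) : ℝ :=
  ‖Matrix.toEuclideanCLM (𝕜 := ℝ) A‖

/-- The matrix (1/n)·11ᵀ, with every entry 1/n. -/
noncomputable def Jmat (n : ℕ) : Matrix (Fin n) (Fin n) ℝ :=
  Matrix.of fun _ _ => (1 : ℝ) / n

/-!
Take `W = 1 - L / (2n)` with `L` the Laplacian of the graph: it is symmetric, fixes `1`, and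
vanishes off the edges. For `y ≠ 0` with mean zero,
`‖W y‖² = ‖y‖² - yᵀLy / n + ‖L y‖² / (4n²) ≤ ‖y‖² - yᵀLy / (2n) < ‖y‖²`,
using `‖L y‖² ≤ 2n · yᵀLy` (Cauchy–Schwarz along each row) and `yᵀLy > 0` (connectivity).
As `(W - J) x = W (x - J x)`, the map `W - J` shrinks every nonzero vector strictly, and by
compactness of the unit ball its norm is then `< 1`.
-/

open Finset

theorem ContinuousLinearMap.opNorm_lt_one_of_norm_apply_lt {E F : Type*}
    [NormedAddCommGroup E] [NormedSpace ℝ E] [ProperSpace E]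
    [NormedAddCommGroup F] [NormedSpace ℝ F] (T : E →L[ℝ] F)
    (hT : ∀ x, x ≠ 0 → ‖T x‖ < ‖x‖) : ‖T‖ < 1 := by
  obtain ⟨x₀, hx₀, hmax⟩ := (isCompact_closedBall (0 : E) 1).exists_isMaxOn
    (Metric.nonempty_closedBall.2 zero_le_one) (continuous_norm.comp T.continuous).continuousOn
  have hx₀_lt : ‖T x₀‖ < 1 := by
    rcases eq_or_ne x₀ 0 with rfl | hne
    · simp
    · exact (hT x₀ hne).trans_le (mem_closedBall_zero_iff.1 hx₀)
  refine lt_of_le_of_lt (T.opNorm_le_of_unit_norm (norm_nonneg _) fun x hx => ?_) hx₀_lt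
  exact hmax (mem_closedBall_zero_iff.2 hx.le)

theorem Matrix.norm_toEuclideanCLM_lt_one {ι : Type*} [Fintype ι] [DecidableEq ι]
    (A : Matrix ι ι ℝ) (hA : ∀ x : ι → ℝ, x ≠ 0 → A *ᵥ x ⬝ᵥ A *ᵥ x < x ⬝ᵥ x) :
    ‖toEuclideanCLM (𝕜 := ℝ) A‖ < 1 := by
  refine ContinuousLinearMap.opNorm_lt_one_of_norm_apply_lt _ fun x hx => ?_
  have hsq (y : EuclideanSpace ℝ ι) : ‖y‖ ^ 2 = y.ofLp ⬝ᵥ y.ofLp := by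
    rw [EuclideanSpace.real_norm_sq_eq]; simp only [dotProduct, sq]
  rw [← sq_lt_sq₀ (norm_nonneg _) (norm_nonneg _), hsq, hsq, ofLp_toEuclideanCLM]
  exact hA _ (by simpa using hx)

noncomputable def Matrix.meanMatrix (V : Type*) [Fintype V] : Matrix V V ℝ :=
  of fun _ _ => 1 / (Fintype.card V : ℝ)

theorem Matrix.meanMatrix_mulVec {V : Type*} [Fintype V] (x : V → ℝ) :
    meanMatrix V *ᵥ x = ((∑ i, x i) / Fintype.card V) • fun _ => 1 := by
  ext i
  simp [meanMatrix, mulVec, dotProduct, ← mul_sum, div_eq_inv_mul]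

theorem Matrix.sub_meanMatrix_mulVec_dotProduct_self_lt {V : Type*} [Fintype V]
    (W : Matrix V V ℝ) (hW1 : W *ᵥ (fun _ => 1) = fun _ => 1)
    (hW : ∀ y : V → ℝ, ∑ i, y i = 0 → y ≠ 0 → W *ᵥ y ⬝ᵥ W *ᵥ y < y ⬝ᵥ y)
    {x : V → ℝ} (hx : x ≠ 0) :
    (W - meanMatrix V) *ᵥ x ⬝ᵥ (W - meanMatrix V) *ᵥ x < x ⬝ᵥ x := by
  obtain ⟨i₀, -⟩ := Function.ne_iff.1 hx
  have : Nonempty V := ⟨i₀⟩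
  have hcard : (Fintype.card V : ℝ) ≠ 0 := Nat.cast_ne_zero.2 Fintype.card_ne_zero
  set m := (∑ i, x i) / Fintype.card V with hm
  have hxsum : ∑ i, x i = Fintype.card V * m := by rw [hm, mul_div_cancel₀ _ hcard]
  set y : V → ℝ := x - m • fun _ => 1 with hy
  have hysum : ∑ i, y i = 0 := by
    simp [hy, sum_sub_distrib, hxsum]
  have hxy : (W - meanMatrix V) *ᵥ x = W *ᵥ y := by
    rw [sub_mulVec, meanMatrix_mulVec, hy, mulVec_sub, mulVec_smul, hW1]
  have hpyth : x ⬝ᵥ x = y ⬝ᵥ y + Fintype.card V * m ^ 2 := by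
    have hsplit (i : V) : x i * x i = y i * y i + (2 * m * x i - m ^ 2) := by
      simp only [hy, Pi.sub_apply, Pi.smul_apply, smul_eq_mul, mul_one]
      ring
    simp only [dotProduct, hsplit, sum_add_distrib, sum_sub_distrib, ← mul_sum, hxsum, sum_const,
      card_univ, nsmul_eq_mul]
    ring
  rw [hxy]
  rcases eq_or_ne y 0 with hy0 | hy0
  · rw [hy0, mulVec_zero, zero_dotProduct]
    simpa only [star_trivial] using dotProduct_star_self_pos_iff.2 hx
  · rw [hpyth]
    exact (hW y hysum hy0).trans_le (le_add_of_nonneg_right (by positivity))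

namespace SimpleGraph

theorem reachable_fromRel_of_reflTransGen {V : Type*} {r : V → V → Prop} {u v : V}
    (h : Relation.ReflTransGen r u v) : (fromRel r).Reachable u v := by
  induction h with
  | refl => rfl
  | @tail b c _ hbc ih =>
    refine ih.trans ?_
    rcases eq_or_ne b c with rfl | hne
    · rfl
    · exact ((fromRel_adj r b c).2 ⟨hne, .inl hbc⟩).reachable

variable {V : Type*} [Fintype V] [DecidableEq V] (G : SimpleGraph V) [DecidableRel G.Adj]

theorem dotProduct_lapMatrix_mulVec_eq (x : V → ℝ) :
    x ⬝ᵥ G.lapMatrix ℝ *ᵥ x = (∑ i, ∑ j, if G.Adj i j then (x i - x j) ^ 2 else 0) / 2 := by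
  rw [← toLinearMap₂'_apply', lapMatrix_toLinearMap₂']

theorem dotProduct_lapMatrix_mulVec_pos (hG : G.Preconnected) {x : V → ℝ}
    (hsum : ∑ i, x i = 0) (hx : x ≠ 0) : 0 < x ⬝ᵥ G.lapMatrix ℝ *ᵥ x := by
  refine lt_of_le_of_ne ?_ fun hzero => hx ?_
  · rw [dotProduct_lapMatrix_mulVec_eq]; positivity
  · rw [← toLinearMap₂'_apply', eq_comm,
      lapMatrix_toLinearMap₂'_apply'_eq_zero_iff_forall_reachable] at hzero
    obtain ⟨i₀, -⟩ := Function.ne_iff.1 hx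
    have hconst : x = fun _ => x i₀ := funext fun i => hzero i i₀ (hG i i₀)
    have : Nonempty V := ⟨i₀⟩
    have hcard : (Fintype.card V : ℝ) ≠ 0 := Nat.cast_ne_zero.2 Fintype.card_ne_zero
    rw [hconst, sum_const, card_univ, nsmul_eq_mul, mul_eq_zero] at hsum
    rw [hconst, hsum.resolve_left hcard]
    rfl

theorem lapMatrix_mulVec_dotProduct_self_le (x : V → ℝ) :
    G.lapMatrix ℝ *ᵥ x ⬝ᵥ G.lapMatrix ℝ *ᵥ x
      ≤ 2 * Fintype.card V * (x ⬝ᵥ G.lapMatrix ℝ *ᵥ x) := by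
  have happly (i : V) : (G.lapMatrix ℝ *ᵥ x) i = ∑ j ∈ G.neighborFinset i, (x i - x j) := by
    rw [lapMatrix_mulVec_apply, sum_sub_distrib, sum_const, card_neighborFinset_eq_degree,
      nsmul_eq_mul]
  have hrow (i : V) : (G.lapMatrix ℝ *ᵥ x) i * (G.lapMatrix ℝ *ᵥ x) i
      ≤ Fintype.card V * ∑ j, if G.Adj i j then (x i - x j) ^ 2 else 0 := by
    rw [← sq, happly, ← sum_filter, ← neighborFinset_eq_filter]
    refine (sq_sum_le_card_mul_sum_sq).trans ?_
    gcongr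
    exact card_le_univ _
  rw [dotProduct_lapMatrix_mulVec_eq, mul_comm 2, mul_assoc, mul_div_cancel₀ _ two_ne_zero, mul_sum]
  exact sum_le_sum fun i _ => hrow i

noncomputable def lapWeightMatrix : Matrix V V ℝ :=
  1 - (2 * Fintype.card V : ℝ)⁻¹ • G.lapMatrix ℝ

theorem lapWeightMatrix_mulVec_one : G.lapWeightMatrix *ᵥ (fun _ => 1) = fun _ => 1 := by
  rw [lapWeightMatrix, sub_mulVec, smul_mulVec, lapMatrix_mulVec_const_eq_zero, smul_zero,
    one_mulVec, sub_zero]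

theorem transpose_lapWeightMatrix : G.lapWeightMatrixᵀ = G.lapWeightMatrix := by
  rw [lapWeightMatrix, transpose_sub, transpose_one, transpose_smul, (isSymm_lapMatrix ℝ G).eq]

theorem lapWeightMatrix_apply_of_ne_of_not_adj {i j : V} (hij : i ≠ j) (hadj : ¬G.Adj i j) :
    G.lapWeightMatrix i j = 0 := by
  simp [lapWeightMatrix, lapMatrix, degMatrix, hij, hadj]

theorem lapWeightMatrix_mulVec_dotProduct_self_lt (hG : G.Preconnected) {y : V → ℝ}
    (hsum : ∑ i, y i = 0) (hy : y ≠ 0) :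
    G.lapWeightMatrix *ᵥ y ⬝ᵥ G.lapWeightMatrix *ᵥ y < y ⬝ᵥ y := by
  obtain ⟨i₀, -⟩ := Function.ne_iff.1 hy
  have : Nonempty V := ⟨i₀⟩
  set c : ℝ := 2 * Fintype.card V
  have hc : 0 < c := by positivity
  have hq := G.dotProduct_lapMatrix_mulVec_pos hG hsum hy
  have hexpand : G.lapWeightMatrix *ᵥ y ⬝ᵥ G.lapWeightMatrix *ᵥ y = y ⬝ᵥ y
      - 2 * c⁻¹ * (y ⬝ᵥ G.lapMatrix ℝ *ᵥ y)
      + c⁻¹ ^ 2 * (G.lapMatrix ℝ *ᵥ y ⬝ᵥ G.lapMatrix ℝ *ᵥ y) := by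
    rw [lapWeightMatrix, sub_mulVec, one_mulVec, smul_mulVec]
    simp only [sub_dotProduct, dotProduct_sub, smul_dotProduct, dotProduct_smul, smul_eq_mul,
      dotProduct_comm (G.lapMatrix ℝ *ᵥ y) y]
    ring
  have hquad : c⁻¹ ^ 2 * (G.lapMatrix ℝ *ᵥ y ⬝ᵥ G.lapMatrix ℝ *ᵥ y)
      ≤ c⁻¹ * (y ⬝ᵥ G.lapMatrix ℝ *ᵥ y) :=
    calc c⁻¹ ^ 2 * (G.lapMatrix ℝ *ᵥ y ⬝ᵥ G.lapMatrix ℝ *ᵥ y)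
        ≤ c⁻¹ ^ 2 * (c * (y ⬝ᵥ G.lapMatrix ℝ *ᵥ y)) := by
          gcongr
          exact G.lapMatrix_mulVec_dotProduct_self_le y
      _ = c⁻¹ * (y ⬝ᵥ G.lapMatrix ℝ *ᵥ y) := by field_simp
  rw [hexpand]
  linarith [mul_pos (inv_pos.2 hc) hq]

end SimpleGraph

theorem exists_weight_matrix_with_contractive_factor_general
    (n : ℕ) (E : Fin n → Fin n → Prop)
    (hsymm : ∀ i j, E i j → E j i)
    (hrefl : ∀ i, E i i)
    (hconn : ∀ i j, Relation.ReflTransGen E i j) :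
    ∃ W : Matrix (Fin n) (Fin n) ℝ,
      W.mulVec (fun _ => 1) = (fun _ => 1) ∧
      Wᵀ.mulVec (fun _ => 1) = (fun _ => 1) ∧
      (∀ i j, ¬ E i j → W i j = 0) ∧
      ind2norm (W - Jmat n) < 1 := by
  classical
  let G := SimpleGraph.fromRel E
  have hG : G.Preconnected := fun i j => SimpleGraph.reachable_fromRel_of_reflTransGen (hconn i j)
  refine ⟨G.lapWeightMatrix, G.lapWeightMatrix_mulVec_one, ?_, fun i j hE => ?_, ?_⟩
  · rw [G.transpose_lapWeightMatrix]
    exact G.lapWeightMatrix_mulVec_one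
  · have hij : i ≠ j := by
      rintro rfl
      exact hE (hrefl i)
    refine G.lapWeightMatrix_apply_of_ne_of_not_adj hij ?_
    rw [SimpleGraph.fromRel_adj]
    exact fun h => h.2.elim hE (hE ∘ hsymm j i)
  · have hJ : Jmat n = meanMatrix (Fin n) := by simp [Jmat, meanMatrix]
    rw [ind2norm, hJ]
    exact norm_toEuclideanCLM_lt_one _ fun x hx =>
      sub_meanMatrix_mulVec_dotProduct_self_lt _ G.lapWeightMatrix_mulVec_one
        (fun _ => G.lapWeightMatrix_mulVec_dotProduct_self_lt hG) hx

theorem exists_weight_matrix_with_contractive_factor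
    (n : ℕ) (hn : 2 ≤ n) (E : Fin n → Fin n → Prop)
    (hsymm : ∀ i j, E i j → E j i)
    (hrefl : ∀ i, E i i)
    (hconn : ∀ i j, Relation.ReflTransGen E i j) :
    ∃ W : Matrix (Fin n) (Fin n) ℝ,
      W.mulVec (fun _ => 1) = (fun _ => 1) ∧
      Wᵀ.mulVec (fun _ => 1) = (fun _ => 1) ∧
      (∀ i j, ¬ E i j → W i j = 0) ∧
      ind2norm (W - Jmat n) < 1 :=
  exists_weight_matrix_with_contractive_factor_general n E hsymm hrefl hconn
end

section
/- Let n ≥ 1 and suppose W ∈ ℝ^{n×n} is entrywise nonnegative and satisfies W1 = 1 and Wᵀ1 = 1. Then W is primitive (i.e., there exists m ≥ 1 such that all entries of W^m are strictly positive) if and only if ρ(W − (1/n)11ᵀ) < 1. -/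
open Matrix Filter

open Topology

/-!
Write `A = W - J`. The row and column sums of `W` give `WJ = JW = J² = J`, hence
`A ^ (k + 1) = W ^ (k + 1) - J`.

If `W ^ m > 0` and `Av = μv` with `μ ≠ 0`, then `JA = 0` forces `Jv = 0`, so
`W ^ m v = μ ^ m v` with `v` non-constant. As `W ^ m` is positive with unit row sums, strict
convexity of the norm on `ℂ` makes the estimate `|μ ^ m| max|vᵢ| ≤ max|vᵢ|` strict, so `|μ| < 1`.

Conversely, if the spectrum of `A` lies in the open unit disc, Gelfand's formula gives
`A ^ k → 0`, so `W ^ k → J`, whose entries are positive.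
-/

theorem sub_pow_succ_of_mul_eq_of_mul_eq {R : Type*} [Ring R] {a e : R} (hae : a * e = e)
    (hea : e * a = e) (he : IsIdempotentElem e) (k : ℕ) :
    (a - e) ^ (k + 1) = a ^ (k + 1) - e := by
  have hpow : ∀ j : ℕ, a ^ j * e = e := fun j => by
    induction j with
    | zero => simp
    | succ j ih => rw [pow_succ', mul_assoc, ih, hae]
  induction k with
  | zero => simp
  | succ k ih =>
    rw [pow_succ, ih, sub_mul, mul_sub, mul_sub, ← pow_succ, hpow, hea, he.eq]
    abel

theorem tendsto_pow_atTop_nhds_zero_of_spectralRadius_lt_one {A : Type*} [NormedRing A]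
    [NormedAlgebra ℂ A] [CompleteSpace A] {a : A} (h : spectralRadius ℂ a < 1) :
    Tendsto (a ^ ·) atTop (𝓝 0) := by
  obtain ⟨r, hρr, hr1⟩ := ENNReal.lt_iff_exists_nnreal_btwn.mp h
  have hbound : ∀ᶠ k : ℕ in atTop, ‖a ^ k‖ ≤ (r : ℝ) ^ k := by
    have hgelfand := spectrum.pow_nnnorm_pow_one_div_tendsto_nhds_spectralRadius a
    filter_upwards [hgelfand.eventually_lt_const hρr, eventually_gt_atTop 0] with k hk hk0
    rw [one_div, ← ENNReal.coe_rpow_of_nonneg _ (by positivity), ENNReal.coe_lt_coe,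
      NNReal.rpow_inv_lt_iff (by positivity), NNReal.rpow_natCast] at hk
    exact_mod_cast hk.le
  exact squeeze_zero_norm' hbound (tendsto_pow_atTop_nhds_zero_of_lt_one r.2 (mod_cast hr1))

namespace Matrix

variable {ι : Type*} [Fintype ι]

theorem map_ofReal_mul (M N : Matrix ι ι ℝ) :
    (M * N).map Complex.ofReal = M.map Complex.ofReal * N.map Complex.ofReal :=
  Matrix.map_mul (f := Complex.ofRealHom)

theorem norm_lt_one_of_pos_of_mulVec_eq_smul {B : Matrix ι ι ℝ} (hpos : ∀ i j, 0 < B i j)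
    (hrow : B *ᵥ (fun _ => 1) = fun _ => 1) {v : ι → ℂ} {μ : ℂ}
    (hv : B.map Complex.ofReal *ᵥ v = μ • v) {i j : ι} (hij : v i ≠ v j) :
    ‖μ‖ < 1 := by
  have : Nonempty ι := ⟨i⟩
  obtain ⟨i₀, hi₀⟩ := Finite.exists_max fun k => ‖v k‖
  have hrow₀ : ∑ k, B i₀ k = 1 := by simpa [mulVec, dotProduct] using congrFun hrow i₀
  have hlt : ‖μ‖ * ‖v i₀‖ < 1 * ‖v i₀‖ :=
    calc ‖μ‖ * ‖v i₀‖ = ‖∑ k, B i₀ k • v k‖ := by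
          rw [← norm_mul, ← smul_eq_mul, ← Pi.smul_apply, ← hv]
          simp [mulVec, dotProduct, Complex.real_smul]
      _ < 1 * ‖v i₀‖ := by
        rw [one_mul]
        exact norm_sum_lt_of_strictConvexSpace (fun k _ => (hpos i₀ k).le) hrow₀
          (Finset.mem_univ i) (Finset.mem_univ j) hij (hpos i₀ i).ne' (hpos i₀ j).ne'
          fun k _ => hi₀ k
  exact lt_of_mul_lt_mul_right hlt (norm_nonneg _)

variable [DecidableEq ι]

theorem exists_mulVec_eq_smul_of_mem_spectrum {K : Type*} [Field K] {A : Matrix ι ι K} {μ : K}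
    (h : μ ∈ spectrum K A) : ∃ v ≠ 0, A *ᵥ v = μ • v := by
  rw [← spectrum_toLin', ← Module.End.hasEigenvalue_iff_mem_spectrum] at h
  obtain ⟨v, hv⟩ := h.exists_hasEigenvector
  exact ⟨v, hv.2, by simpa using hv.apply_eq_smul⟩

theorem pow_mulVec_of_mulVec_eq_smul {R : Type*} [CommSemiring R] {B : Matrix ι ι R}
    {v : ι → R} {μ : R} (h : B *ᵥ v = μ • v) (k : ℕ) : B ^ k *ᵥ v = μ ^ k • v := by
  induction k with
  | zero => simp
  | succ k ih => rw [pow_succ, ← mulVec_mulVec, h, mulVec_smul, ih, smul_smul, ← pow_succ']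

theorem pow_mulVec_const_one {R : Type*} [CommSemiring R] {B : Matrix ι ι R}
    (h : B *ᵥ (fun _ => 1) = fun _ => 1) (k : ℕ) : B ^ k *ᵥ (fun _ => 1) = fun _ => 1 := by
  induction k with
  | zero => simp
  | succ k ih => rw [pow_succ, ← mulVec_mulVec, h, ih]

theorem map_ofReal_pow (M : Matrix ι ι ℝ) (k : ℕ) :
    (M ^ k).map Complex.ofReal = M.map Complex.ofReal ^ k :=
  Matrix.map_pow M Complex.ofRealHom k

theorem tendsto_pow_atTop_nhds_zero_of_forall_mem_spectrum {A : Matrix ι ι ℂ}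
    (h : ∀ μ ∈ spectrum ℂ A, ‖μ‖ < 1) : Tendsto (A ^ ·) atTop (𝓝 0) := by
  let := Matrix.linftyOpNormedRing (n := ι) (α := ℂ)
  let := Matrix.linftyOpNormedAlgebra (n := ι) (α := ℂ) (R := ℂ)
  have : CompleteSpace (Matrix ι ι ℂ) := FiniteDimensional.complete ℂ _
  refine tendsto_pow_atTop_nhds_zero_of_spectralRadius_lt_one ?_
  rcases (spectrum ℂ A).eq_empty_or_nonempty with hempty | hne
  · simp [spectralRadius, hempty]
  · exact_mod_cast spectrum.spectralRadius_lt_of_forall_lt_of_nonempty hne (r := 1)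
      fun μ hμ => mod_cast h μ hμ

theorem tendsto_pow_atTop_nhds_zero_of_forall_mem_spectrum_map_ofReal {A : Matrix ι ι ℝ}
    (h : ∀ μ ∈ spectrum ℂ (A.map Complex.ofReal), ‖μ‖ < 1) :
    Tendsto (A ^ ·) atTop (𝓝 0) := by
  have hre : Continuous fun M : Matrix ι ι ℂ => M.map Complex.re :=
    continuous_id.matrix_map Complex.continuous_re
  convert (hre.tendsto 0).comp (tendsto_pow_atTop_nhds_zero_of_forall_mem_spectrum h) using 1
  · ext k i j
    simp [← map_ofReal_pow]
  · simp

end Matrix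

theorem specRad_lt_iff {n : ℕ} (A : Matrix (Fin n) (Fin n) ℝ) {r : ℝ} (hr : 0 < r) :
    specRad A < r ↔ ∀ μ ∈ spectrum ℂ (A.map Complex.ofReal), ‖μ‖ < r := by
  have hset :
      {r : ℝ | ∃ μ : ℂ, μ ∈ spectrum ℂ (A.map Complex.ofReal) ∧ r = ‖μ‖} =
        (‖·‖) '' spectrum ℂ (A.map Complex.ofReal) := by
    ext
    simp [eq_comm]
  rw [specRad, hset]
  rcases (spectrum ℂ (A.map Complex.ofReal)).eq_empty_or_nonempty with hempty | hne
  · simp [hempty, hr]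
  · rw [((finite_spectrum _).image _).csSup_lt_iff (hne.image _), Set.forall_mem_image]

section Jmat

variable {n : ℕ} {W : Matrix (Fin n) (Fin n) ℝ}

theorem mul_Jmat (hrow : W *ᵥ (fun _ => 1) = fun _ => 1) : W * Jmat n = Jmat n := by
  ext i j
  have hi : ∑ k, W i k = 1 := by simpa [mulVec, dotProduct] using congrFun hrow i
  simp [Jmat, mul_apply, ← Finset.sum_mul, hi]

theorem Jmat_mul (hcol : Wᵀ *ᵥ (fun _ => 1) = fun _ => 1) : Jmat n * W = Jmat n := by
  ext i j
  have hj : ∑ k, W k j = 1 := by simpa [mulVec, dotProduct] using congrFun hcol j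
  simp [Jmat, mul_apply, ← Finset.mul_sum, hj]

theorem Jmat_apply_pos (i j : Fin n) : 0 < Jmat n i j := by
  have : (0 : ℝ) < n := by exact_mod_cast Fin.pos i
  simpa [Jmat] using this

theorem isIdempotentElem_Jmat : IsIdempotentElem (Jmat n) := by
  ext i j
  have : (n : ℝ) ≠ 0 := by exact_mod_cast (Fin.pos i).ne'
  simp [Jmat, mul_apply]
  field_simp

theorem Jmat_map_mulVec_const (c : ℂ) :
    (Jmat n).map Complex.ofReal *ᵥ (fun _ => c) = fun _ => c := by
  ext i
  have : (n : ℂ) ≠ 0 := by exact_mod_cast (Fin.pos i).ne'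
  simp [Jmat, mulVec, dotProduct]
  field_simp

theorem pow_succ_eq_sub_Jmat_pow_add_Jmat (hrow : W *ᵥ (fun _ => 1) = fun _ => 1)
    (hcol : Wᵀ *ᵥ (fun _ => 1) = fun _ => 1) (k : ℕ) :
    W ^ (k + 1) = (W - Jmat n) ^ (k + 1) + Jmat n := by
  rw [sub_pow_succ_of_mul_eq_of_mul_eq (mul_Jmat hrow) (Jmat_mul hcol) isIdempotentElem_Jmat,
    sub_add_cancel]

theorem norm_lt_one_of_mem_spectrum_sub_Jmat (hrow : W *ᵥ (fun _ => 1) = fun _ => 1)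
    (hcol : Wᵀ *ᵥ (fun _ => 1) = fun _ => 1) {m : ℕ} (hm : 1 ≤ m)
    (hpos : ∀ i j, 0 < (W ^ m) i j) {μ : ℂ}
    (hμ : μ ∈ spectrum ℂ ((W - Jmat n).map Complex.ofReal)) : ‖μ‖ < 1 := by
  rcases eq_or_ne μ 0 with rfl | hμ0
  · simp
  obtain ⟨v, hv0, hv⟩ := exists_mulVec_eq_smul_of_mem_spectrum hμ
  have hJv : (Jmat n).map Complex.ofReal *ᵥ v = 0 := by
    have hJA : Jmat n * (W - Jmat n) = 0 := by
      rw [mul_sub, Jmat_mul hcol, isIdempotentElem_Jmat.eq, sub_self]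
    have : μ • ((Jmat n).map Complex.ofReal *ᵥ v) = 0 := by
      rw [← mulVec_smul, ← hv, mulVec_mulVec, ← map_ofReal_mul, hJA,
        Matrix.map_zero _ Complex.ofReal_zero, zero_mulVec]
    exact (smul_eq_zero.1 this).resolve_left hμ0
  have hWv : (W ^ m).map Complex.ofReal *ᵥ v = μ ^ m • v := by
    obtain ⟨k, rfl⟩ := Nat.exists_eq_add_of_le' hm
    rw [pow_succ_eq_sub_Jmat_pow_add_Jmat hrow hcol, Matrix.map_add _ Complex.ofReal_add,
      add_mulVec, hJv, add_zero, map_ofReal_pow]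
    exact pow_mulVec_of_mulVec_eq_smul hv _
  obtain ⟨i, hi⟩ : ∃ i, v i ≠ 0 := Function.ne_iff.1 hv0
  -- `J` fixes constant vectors but kills `v ≠ 0`.
  obtain ⟨j, hij⟩ : ∃ j, v j ≠ v i := by
    by_contra! hconst
    have hv_const : v = fun _ => v i := funext hconst
    apply hi
    rw [← congrFun (Jmat_map_mulVec_const (v i)) i, ← hv_const, hJv, Pi.zero_apply]
  have hμm := norm_lt_one_of_pos_of_mulVec_eq_smul hpos (pow_mulVec_const_one hrow m) hWv hij
  rw [norm_pow] at hμm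
  exact (pow_lt_one_iff_of_nonneg (norm_nonneg μ) (by omega)).1 hμm

theorem tendsto_pow_atTop_nhds_Jmat (hrow : W *ᵥ (fun _ => 1) = fun _ => 1)
    (hcol : Wᵀ *ᵥ (fun _ => 1) = fun _ => 1)
    (h : ∀ μ ∈ spectrum ℂ ((W - Jmat n).map Complex.ofReal), ‖μ‖ < 1) :
    Tendsto (W ^ ·) atTop (𝓝 (Jmat n)) := by
  have hsum :=
    (tendsto_pow_atTop_nhds_zero_of_forall_mem_spectrum_map_ofReal h).add_const (Jmat n)
  rw [zero_add] at hsum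
  refine hsum.congr' ?_
  filter_upwards [eventually_ge_atTop 1] with k hk
  obtain ⟨k, rfl⟩ := Nat.exists_eq_add_of_le' hk
  exact (pow_succ_eq_sub_Jmat_pow_add_Jmat hrow hcol k).symm

end Jmat

theorem primitive_iff_spectral_radius_lt_one_general
    (n : ℕ) (W : Matrix (Fin n) (Fin n) ℝ)
    (hrow : W.mulVec (fun _ => 1) = (fun _ => 1))
    (hcol : Wᵀ.mulVec (fun _ => 1) = (fun _ => 1)) :
    (∃ m : ℕ, 1 ≤ m ∧ ∀ i j, 0 < (W ^ m) i j) ↔ specRad (W - Jmat n) < 1 := by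
  rw [specRad_lt_iff _ one_pos]
  constructor
  · rintro ⟨m, hm, hpos⟩ μ hμ
    exact norm_lt_one_of_mem_spectrum_sub_Jmat hrow hcol hm hpos hμ
  · intro h
    have hW := tendsto_pow_atTop_nhds_Jmat hrow hcol h
    have hentries : ∀ᶠ k in atTop, ∀ i j, 0 < (W ^ k) i j :=
      eventually_all.2 fun i => eventually_all.2 fun j =>
        ((continuous_id.matrix_elem i j).tendsto _ |>.comp hW).eventually_const_lt
          (Jmat_apply_pos i j)
    exact ((eventually_ge_atTop 1).and hentries).exists

theorem primitive_iff_spectral_radius_lt_one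
    (n : ℕ) (hn : 1 ≤ n) (W : Matrix (Fin n) (Fin n) ℝ)
    (hnonneg : ∀ i j, 0 ≤ W i j)
    (hrow : W.mulVec (fun _ => 1) = (fun _ => 1))
    (hcol : Wᵀ.mulVec (fun _ => 1) = (fun _ => 1)) :
    (∃ m : ℕ, 1 ≤ m ∧ ∀ i j, 0 < (W ^ m) i j) ↔ specRad (W - Jmat n) < 1 :=
  primitive_iff_spectral_radius_lt_one_general n W hrow hcol
end
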